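/- arXiv:math/0506427 — 6 statements merged into one kernel-verified Lean document; each statement's English description precedes it below -/
import Mathlib

section
/- Let λ ≥ 2 be a real number, d ≥ 1, and let p : Fin (d+1) → EuclideanSpace ℝ (Fin d) be an affinely independent family of d+1 points such that dist (p i) (p j) ∈ {1, λ} for all i ≠ j. Then the relation R on Fin (d+1) defined by R i j ↔ (i = j ∨ dist (p i) (p j) = 1) is an equivalence relation; in particular it is transitive, so its classes partition the d+1 vertices into blocks of pairwise distance 1, with vertices of different blocks at distance λ. -/
theorem stmt_1 (lam : ℝ) (hlam : 2 ≤ lam) (d : ℕ) (hd : 1 ≤ d)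
    (p : Fin (d + 1) → EuclideanSpace ℝ (Fin d))
    (hind : AffineIndependent ℝ p)
    (hdist : ∀ i j, i ≠ j → dist (p i) (p j) ∈ ({1, lam} : Set ℝ)) :
    Equivalence (fun i j : Fin (d + 1) => i = j ∨ dist (p i) (p j) = 1) := by
  constructor
  · intro i; exact Or.inl rfl
  · rintro i j (rfl | h)
    · exact Or.inl rfl
    · exact Or.inr (by rwa [dist_comm])
  · rintro i j k (rfl | hij) (rfl | hjk)
    · exact Or.inl rfl
    · exact Or.inr hjk
    · exact Or.inr hij
    · rcases eq_or_ne i k with rfl | hik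
      · exact Or.inl rfl
      refine Or.inr ?_
      have hij' : i ≠ j := by rintro rfl; simp at hij
      have hjk' : j ≠ k := by rintro rfl; simp at hjk
      rcases hdist i k hik with h1 | h2
      · exact h1
      · exfalso
        have htri : dist (p i) (p k) ≤ dist (p i) (p j) + dist (p j) (p k) :=
          dist_triangle _ _ _
        rw [hij, hjk, h2] at htri
        have hlam2 : lam = 2 := le_antisymm (by linarith) hlam
        have heq : dist (p i) (p j) + dist (p j) (p k) = dist (p i) (p k) := by
          rw [hij, hjk, h2, hlam2]; norm_num
        have hw : Wbtw ℝ (p i) (p j) (p k) := dist_add_dist_eq_iff.mp heq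
        have hcol : Collinear ℝ ({p i, p j, p k} : Set _) := hw.collinear
        have hemb : Function.Injective ![i, j, k] := by
          intro a b hab
          fin_cases a <;> fin_cases b <;> simp_all [Fin.ext_iff] <;>
            first
              | rfl
              | (exfalso; first
                  | exact hij' (by simpa using hab)
                  | exact hij' (by simpa using hab.symm)
                  | exact hjk' (by simpa using hab)
                  | exact hjk' (by simpa using hab.symm)
                  | exact hik (by simpa using hab)
                  | exact hik (by simpa using hab.symm))
        have hsub : AffineIndependent ℝ (p ∘ ![i, j, k]) :=
          hind.comp_embedding ⟨![i, j, k], hemb⟩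
        have : AffineIndependent ℝ ![p i, p j, p k] := by
          convert hsub using 1
          ext a
          fin_cases a <;> rfl
        exact (affineIndependent_iff_not_collinear_set.mp this) hcol
end

section
/- Let λ ≥ 2 be a real number, d ≥ 1, r ≥ 1, and let b : Fin (d+1) → Fin r be any map (assigning each of the d+1 indices to one of r blocks). Then there exists an affinely independent family p : Fin (d+1) → EuclideanSpace ℝ (Fin d) such that for all i ≠ j, dist (p i) (p j) = 1 if b i = b j and dist (p i) (p j) = λ if b i ≠ b j. -/
/-!
Put `p i = a • e i + c • f (b i)` for orthonormal vectors `e i`, `f k`. Then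
`‖p i - p j‖² = 2a² + 2c² [b i ≠ b j]` for `i ≠ j`, so `a² = 1/2` and `c² = (λ² - 1)/2` give
the two distances, and the coordinates along the `e i` make the points affinely independent.
The `d + 1` points span a `d`-dimensional affine subspace, which is isometric to `ℝᵈ`.
-/

open Set Module

section Transfer

variable {E : Type*} [NormedAddCommGroup E] [InnerProductSpace ℝ E]

theorem AffineIndependent.exists_euclideanSpace_dist_eq {n : ℕ} {p : Fin (n + 1) → E}
    (hp : AffineIndependent ℝ p) :
    ∃ q : Fin (n + 1) → EuclideanSpace ℝ (Fin n),
      AffineIndependent ℝ q ∧ ∀ i j, dist (q i) (q j) = dist (p i) (p j) := by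
  set S := vectorSpan ℝ (range p)
  have hS : finrank ℝ S = n := hp.finrank_vectorSpan (Fintype.card_fin _)
  let φ : S ≃ₗᵢ[ℝ] EuclideanSpace ℝ (Fin n) :=
    ((stdOrthonormalBasis ℝ S).reindex (finCongr hS)).repr
  let p' : Fin (n + 1) → S := fun i =>
    ⟨p i -ᵥ p 0, vsub_mem_vectorSpan ℝ (mem_range_self i) (mem_range_self 0)⟩
  refine ⟨φ ∘ p', ?_, fun i j => ?_⟩
  · have hp' : AffineIndependent ℝ p' :=
      .of_comp S.subtype.toAffineMap (hp.map' (AffineEquiv.vaddConst ℝ (p 0)).symm.toAffineMap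
        (AffineEquiv.injective _))
    exact hp'.map' φ.toLinearEquiv.toLinearMap.toAffineMap φ.injective
  · simp only [Function.comp_apply, LinearIsometryEquiv.dist_map, Subtype.dist_eq, p',
      dist_vsub_cancel_right]

end Transfer

section BlockSimplex

variable {E ι κ : Type*} [NormedAddCommGroup E] [InnerProductSpace ℝ E]

def blockSimplex (e : ι ⊕ κ → E) (b : ι → κ) (a c : ℝ) (i : ι) : E :=
  a • e (.inl i) + c • e (.inr (b i))

variable {e : ι ⊕ κ → E} (he : Orthonormal ℝ e) (b : ι → κ) (a c : ℝ)
include he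

theorem inner_blockSimplex [DecidableEq ι] [DecidableEq κ] (i j : ι) :
    inner ℝ (blockSimplex e b a c i) (blockSimplex e b a c j) =
      (if i = j then a ^ 2 else 0) + if b i = b j then c ^ 2 else 0 := by
  rw [orthonormal_iff_ite] at he
  simp only [blockSimplex, inner_add_left, inner_add_right, inner_smul_left, inner_smul_right, he]
  split_ifs <;> simp_all <;> ring

theorem dist_blockSimplex_sq [DecidableEq κ] {i j : ι} (hij : i ≠ j) :
    dist (blockSimplex e b a c i) (blockSimplex e b a c j) ^ 2 =
      2 * a ^ 2 + if b i = b j then 0 else 2 * c ^ 2 := by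
  classical
  rw [dist_eq_norm, norm_sub_sq_real, ← real_inner_self_eq_norm_sq,
    ← real_inner_self_eq_norm_sq, inner_blockSimplex he, inner_blockSimplex he,
    inner_blockSimplex he]
  split_ifs <;> simp_all <;> ring

theorem affineIndependent_blockSimplex {a : ℝ} (ha : a ≠ 0) :
    AffineIndependent ℝ (blockSimplex e b a c) := by
  classical
  let π : E →ₗ[ℝ] ι → ℝ := LinearMap.pi fun k => innerₛₗ ℝ (e (.inl k))
  refine .of_comp π.toAffineMap (LinearIndependent.affineIndependent ℝ ?_)
  have hπ : π ∘ blockSimplex e b a c = fun i => Pi.single i a := by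
    rw [orthonormal_iff_ite] at he
    ext i k
    simp [π, blockSimplex, inner_add_right, inner_smul_right, he, Pi.single_apply]
  simpa [hπ] using Pi.linearIndependent_single_of_ne_zero (R := ℝ) fun _ : ι => ha

theorem Orthonormal.exists_affineIndependent_block_dist {lam : ℝ} (hlam : 1 ≤ lam) :
    ∃ p : ι → E, AffineIndependent ℝ p ∧ ∀ i j, i ≠ j →
      (b i = b j → dist (p i) (p j) = 1) ∧ (b i ≠ b j → dist (p i) (p j) = lam) := by
  set a := √(1 / 2)
  set c := √((lam ^ 2 - 1) / 2)
  have ha : a ^ 2 = 1 / 2 := Real.sq_sqrt (by norm_num)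
  have hc : c ^ 2 = (lam ^ 2 - 1) / 2 := Real.sq_sqrt (by nlinarith)
  classical
  refine ⟨blockSimplex e b a c, affineIndependent_blockSimplex he b c (by positivity),
    fun i j hij => ⟨fun hb => ?_, fun hb => ?_⟩⟩
  · rw [← pow_left_inj₀ dist_nonneg zero_le_one two_ne_zero, dist_blockSimplex_sq he b a c hij,
      if_pos hb, ha]
    norm_num
  · rw [← pow_left_inj₀ dist_nonneg (by linarith) two_ne_zero, dist_blockSimplex_sq he b a c hij,
      if_neg hb, ha, hc]
    ring

end BlockSimplex

theorem stmt_2_general (lam : ℝ) (hlam : 2 ≤ lam) (d r : ℕ)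
    (b : Fin (d + 1) → Fin r) :
    ∃ p : Fin (d + 1) → EuclideanSpace ℝ (Fin d),
      AffineIndependent ℝ p ∧
      ∀ i j, i ≠ j →
        (b i = b j → dist (p i) (p j) = 1) ∧ (b i ≠ b j → dist (p i) (p j) = lam) := by
  obtain ⟨p, hp, hp_dist⟩ := (EuclideanSpace.basisFun (Fin (d + 1) ⊕ Fin r) ℝ).orthonormal
    |>.exists_affineIndependent_block_dist b (by linarith : (1 : ℝ) ≤ lam)
  obtain ⟨q, hq, hq_dist⟩ := hp.exists_euclideanSpace_dist_eq
  exact ⟨q, hq, fun i j hij => by simpa only [hq_dist] using hp_dist i j hij⟩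

theorem stmt_2 (lam : ℝ) (hlam : 2 ≤ lam) (d r : ℕ) (hd : 1 ≤ d) (hr : 1 ≤ r)
    (b : Fin (d + 1) → Fin r) :
    ∃ p : Fin (d + 1) → EuclideanSpace ℝ (Fin d),
      AffineIndependent ℝ p ∧
      ∀ i j, i ≠ j →
        (b i = b j → dist (p i) (p j) = 1) ∧ (b i ≠ b j → dist (p i) (p j) = lam) :=
  stmt_2_general lam hlam d r b
end

section
/- Let d ≥ 1, let λ ≥ 2 be a real number, and let b : Fin (d+1) → ℕ be any map. Let A be the (d+1)×(d+1) real matrix with A i i = 0, A i j = 1 for i ≠ j with b i = b j, and A i j = λ² for b i ≠ b j, and let Ā be the (d+2)×(d+2) matrix obtained by bordering A with a new first row and first column both equal to (0, 1, 1, …, 1). Then (−1)^{d+1} · det Ā > 0. -/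
/-!
Writing `C i j = [b i = b j]`, the matrix is `A = λ² J - M` with `M = 1 + (λ² - 1) C`. As a Gram
matrix of fibre indicators `C` is positive semidefinite, so `M` is positive definite. In the
bordered matrix the constant part `λ² J` is removed by subtracting multiples of the border row, and
the Schur complement with respect to `-M` gives `(-1)^(d+1) det Ā = det M * (𝟙 ⬝ᵥ M⁻¹ 𝟙) > 0`.
-/

open Matrix

namespace Matrix

def cayleyMengerMatrix {n R : Type*} [Zero R] [One R] (A : Matrix n n R) :
    Matrix (Fin 1 ⊕ n) (Fin 1 ⊕ n) R :=
  fromBlocks 0 (of fun _ _ => 1) (of fun _ _ => 1) A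

theorem det_eq_det_cayleyMengerMatrix {R : Type*} [CommRing R] {m : ℕ}
    (A : Matrix (Fin m) (Fin m) R) (Abar : Matrix (Fin (m + 1)) (Fin (m + 1)) R)
    (h00 : Abar 0 0 = 0) (h0row : ∀ j : Fin m, Abar 0 j.succ = 1)
    (h0col : ∀ i : Fin m, Abar i.succ 0 = 1) (hsucc : ∀ i j, Abar i.succ j.succ = A i j) :
    Abar.det = (cayleyMengerMatrix A).det := by
  let e : Fin 1 ⊕ Fin m ≃ Fin (m + 1) := finSumFinEquiv.trans (finCongr (Nat.add_comm 1 m))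
  have he0 (k : Fin 1) : e (.inl k) = 0 := by ext; simp [e]
  have hesucc (i : Fin m) : e (.inr i) = i.succ := by ext; simp [e]
  rw [← det_submatrix_equiv_self e]
  congr 1
  ext (k | i) (l | j) <;> simp [cayleyMengerMatrix, he0, hesucc, h00, h0row, h0col, hsucc]

section Determinant

variable {n : Type*} [Fintype n] [DecidableEq n]

theorem det_cayleyMengerMatrix_add_const {R : Type*} [CommRing R] (A : Matrix n n R) (c : R) :
    (cayleyMengerMatrix (A + of fun _ _ => c)).det = (cayleyMengerMatrix A).det := by
  have hfactor : cayleyMengerMatrix (A + of fun _ _ => c) =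
      fromBlocks 1 0 (of fun _ _ => c) 1 * cayleyMengerMatrix A := by
    simp only [cayleyMengerMatrix, fromBlocks_multiply]
    congr 1 <;> ext <;> simp [mul_apply, add_comm]
  rw [hfactor, det_mul, det_fromBlocks_zero₁₂, det_one, det_one, one_mul, one_mul]

theorem neg_one_pow_card_mul_det_cayleyMengerMatrix_neg {M : Matrix n n ℝ} (hM : M.PosDef) :
    (-1) ^ Fintype.card n * (cayleyMengerMatrix (-M)).det = M.det * (1 ⬝ᵥ M⁻¹ *ᵥ 1) := by
  let := hM.isUnit.invertible
  let := invertibleNeg M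
  have hsign : ((-1 : ℝ) ^ Fintype.card n) * (-1) ^ Fintype.card n = 1 := by
    rw [← mul_pow]
    norm_num
  rw [cayleyMengerMatrix, det_fromBlocks₂₂, invOf_neg, invOf_eq_nonsing_inv, det_neg,
    det_unique (n := Fin 1), ← mul_assoc, ← mul_assoc, hsign, one_mul]
  simp [mul_apply, dotProduct, mulVec, Finset.sum_comm (γ := n)]

end Determinant

theorem posSemidef_ite_apply_eq_apply {ι κ R : Type*} [Fintype ι] [DecidableEq κ] [CommRing R]
    [PartialOrder R] [StarRing R] [StarOrderedRing R] (b : ι → κ) :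
    (of fun i j => if b i = b j then (1 : R) else 0).PosSemidef := by
  let U : Matrix (Set.range b) ι R := of fun s i => if b i = s then 1 else 0
  convert posSemidef_conjTranspose_mul_self U using 1
  ext i j
  simp only [U, mul_apply, conjTranspose_apply, of_apply]
  rw [Fintype.sum_eq_single ⟨b j, j, rfl⟩ fun s hs => by
    rw [if_neg (c := b j = s) fun h => hs (Subtype.ext h.symm), mul_zero]]
  by_cases h : b i = b j <;> simp [h]

end Matrix

theorem stmt_5_general (d : ℕ) (lam : ℝ) (hlam : 2 ≤ lam)
    (b : Fin (d + 1) → ℕ)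
    (A : Matrix (Fin (d + 1)) (Fin (d + 1)) ℝ)
    (hA : ∀ i j, A i j = if i = j then 0 else if b i = b j then 1 else lam ^ 2)
    (Abar : Matrix (Fin (d + 2)) (Fin (d + 2)) ℝ)
    (hbar00 : Abar 0 0 = 0)
    (hbar0row : ∀ j : Fin (d + 1), Abar 0 j.succ = 1)
    (hbar0col : ∀ i : Fin (d + 1), Abar i.succ 0 = 1)
    (hbarA : ∀ i j : Fin (d + 1), Abar i.succ j.succ = A i j) :
    (-1 : ℝ) ^ (d + 1) * Abar.det > 0 := by
  set M : Matrix (Fin (d + 1)) (Fin (d + 1)) ℝ :=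
    1 + (lam ^ 2 - 1) • of fun i j => if b i = b j then 1 else 0
  have hM : M.PosDef :=
    PosDef.one.add_posSemidef ((posSemidef_ite_apply_eq_apply b).smul (by nlinarith))
  have hAM : A = -M + of fun _ _ => lam ^ 2 := by
    ext i j
    rw [hA]
    by_cases hij : i = j <;> by_cases hb : b i = b j <;> simp [M, hij, hb, one_apply] <;> ring
  have hsign := neg_one_pow_card_mul_det_cayleyMengerMatrix_neg hM
  rw [Fintype.card_fin] at hsign
  rw [det_eq_det_cayleyMengerMatrix A Abar hbar00 hbar0row hbar0col hbarA, hAM,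
    det_cayleyMengerMatrix_add_const, hsign]
  exact mul_pos hM.det_pos (by simpa using hM.inv.dotProduct_mulVec_pos one_ne_zero)

theorem stmt_5 (d : ℕ) (hd : 1 ≤ d) (lam : ℝ) (hlam : 2 ≤ lam)
    (b : Fin (d + 1) → ℕ)
    (A : Matrix (Fin (d + 1)) (Fin (d + 1)) ℝ)
    (hA : ∀ i j, A i j = if i = j then 0 else if b i = b j then 1 else lam ^ 2)
    (Abar : Matrix (Fin (d + 2)) (Fin (d + 2)) ℝ)
    (hbar00 : Abar 0 0 = 0)
    (hbar0row : ∀ j : Fin (d + 1), Abar 0 j.succ = 1)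
    (hbar0col : ∀ i : Fin (d + 1), Abar i.succ 0 = 1)
    (hbarA : ∀ i j : Fin (d + 1), Abar i.succ j.succ = A i j) :
    (-1 : ℝ) ^ (d + 1) * Abar.det > 0 :=
  stmt_5_general d lam hlam b A hA Abar hbar00 hbar0row hbar0col hbarA
end

section
/- Let d ≥ 1, let λ ≥ 2 be a real number, and let b : Fin (d+1) → ℕ be any map. Let A be the (d+1)×(d+1) real matrix with A i i = 0, A i j = 1 for i ≠ j with b i = b j, and A i j = λ² for b i ≠ b j, and let Ā be the (d+2)×(d+2) matrix obtained by bordering A with a new first row and first column both equal to (0, 1, 1, …, 1). Then (−1)^{d+1} · (λ² · det Ā + det A) > 0. -/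
/-!
Subtracting `λ²` from every entry of `A` leaves `-(1 + (λ² - 1) • S)`, where `S` is the `0/1`
matrix of the relation "same block". `S` is a Gram matrix of block indicators, so
`1 + (λ² - 1) • S` is positive definite for `λ² ≥ 1`, and `(-1)^(d+1) det (A - λ² J) > 0`
with `J` the all-ones matrix.
The Cayley–Menger border converts the shift into `det (A - t J) = det A + t det Ā`, which follows
by taking Schur complements of a unit corner entry.
-/

open Matrix

namespace Matrix

section Bordered

variable {R : Type*} [CommRing R] {n : ℕ}

theorem det_eq_det_schur_of_corner_eq_one (K : Matrix (Fin (n + 1)) (Fin (n + 1)) R)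
    (h : K 0 0 = 1) :
    K.det = (K.submatrix Fin.succ Fin.succ -
      vecMulVec (fun i => K (Fin.succ i) 0) (fun j => K 0 (Fin.succ j))).det := by
  let e : Unit ⊕ Fin n ≃ Fin (n + 1) :=
    (Equiv.sumComm _ _).trans ((Equiv.optionEquivSumPUnit _).symm.trans (finSuccEquiv n).symm)
  have hblocks : K.submatrix e e = fromBlocks 1 (of fun _ j => K 0 j.succ)
      (of fun i _ => K i.succ 0) (K.submatrix Fin.succ Fin.succ) := by
    ext (_ | i) (_ | j) <;> simp [e, h]
  rw [← det_submatrix_equiv_self e, hblocks, det_fromBlocks_one₁₁]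
  congr 2
  ext i j
  simp [mul_apply, vecMulVec_apply]

theorem det_updateRow_zero_single_zero (B : Matrix (Fin (n + 1)) (Fin (n + 1)) R) :
    (B.updateRow 0 (Pi.single 0 1)).det = (B.submatrix Fin.succ Fin.succ).det := by
  rw [det_eq_det_schur_of_corner_eq_one _ (by simp)]
  congr 1
  ext i j
  simp [vecMulVec_apply, Fin.succ_ne_zero]

theorem smul_det_add_det_submatrix_succ_of_border (B : Matrix (Fin (n + 1)) (Fin (n + 1)) R)
    (h00 : B 0 0 = 0) (hrow : ∀ j, B 0 (Fin.succ j) = 1) (hcol : ∀ i, B (Fin.succ i) 0 = 1)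
    (t : R) :
    t * B.det + (B.submatrix Fin.succ Fin.succ).det =
      (B.submatrix Fin.succ Fin.succ - of fun _ _ => t).det := by
  have hdet := det_eq_det_schur_of_corner_eq_one (B.updateRow 0 (t • B 0 + Pi.single 0 1))
    (by simp [h00])
  rw [det_updateRow_add, det_updateRow_smul, updateRow_eq_self,
    det_updateRow_zero_single_zero] at hdet
  rw [hdet]
  congr 1
  ext i j
  simp [vecMulVec_apply, hrow, hcol, Fin.succ_ne_zero]

end Bordered

section SameFiber

variable {ι κ : Type*} [Fintype ι] [DecidableEq κ]

def sameFiber (R : Type*) [Zero R] [One R] (b : ι → κ) : Matrix ι ι R :=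
  of fun i j => if b i = b j then 1 else 0

variable {R : Type*} [CommRing R] [PartialOrder R] [StarRing R] [StarOrderedRing R]

theorem posSemidef_sameFiber (b : ι → κ) : (sameFiber R b).PosSemidef := by
  let N : Matrix (Set.range b) ι R := of fun c i => if b i = c then 1 else 0
  convert posSemidef_conjTranspose_mul_self N
  ext i j
  rw [sameFiber, of_apply, mul_apply, Fintype.sum_eq_single ⟨b i, i, rfl⟩]
  · simp [N, eq_comm]
  · intro c hc
    have hic : b i ≠ c := fun h => hc (Subtype.ext h.symm)
    simp [N, hic]

theorem posDef_one_add_smul_sameFiber [DecidableEq ι] [NoZeroDivisors R] (b : ι → κ) {c : R}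
    (hc : 0 ≤ c) : (1 + c • sameFiber R b).PosDef :=
  PosDef.one.add_posSemidef ((posSemidef_sameFiber b).smul hc)

end SameFiber

end Matrix

theorem stmt_6_general (d : ℕ) (lam : ℝ) (hlam : 2 ≤ lam)
    (b : Fin (d + 1) → ℕ)
    (A : Matrix (Fin (d + 1)) (Fin (d + 1)) ℝ)
    (hA : ∀ i j, A i j = if i = j then 0 else if b i = b j then 1 else lam ^ 2)
    (Abar : Matrix (Fin (d + 2)) (Fin (d + 2)) ℝ)
    (hbar00 : Abar 0 0 = 0)
    (hbar0row : ∀ j : Fin (d + 1), Abar 0 j.succ = 1)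
    (hbar0col : ∀ i : Fin (d + 1), Abar i.succ 0 = 1)
    (hbarA : ∀ i j : Fin (d + 1), Abar i.succ j.succ = A i j) :
    (-1 : ℝ) ^ (d + 1) * (lam ^ 2 * Abar.det + A.det) > 0 := by
  have hAbar : Abar.submatrix Fin.succ Fin.succ = A := ext hbarA
  have hshift : A - of (fun _ _ => lam ^ 2) = -(1 + (lam ^ 2 - 1) • sameFiber ℝ b) := by
    ext i j
    rw [Matrix.sub_apply, hA]
    by_cases hij : i = j
    · simp [sameFiber, hij]
    · by_cases hb : b i = b j <;> simp [sameFiber, hij, hb]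
  have hP := posDef_one_add_smul_sameFiber b (by nlinarith : (0 : ℝ) ≤ lam ^ 2 - 1)
  rw [← hAbar, smul_det_add_det_submatrix_succ_of_border Abar hbar00 hbar0row hbar0col, hAbar,
    hshift, det_neg, Fintype.card_fin, ← mul_assoc, ← pow_add, Even.neg_one_pow ⟨_, rfl⟩, one_mul]
  exact hP.det_pos

theorem stmt_6 (d : ℕ) (hd : 1 ≤ d) (lam : ℝ) (hlam : 2 ≤ lam)
    (b : Fin (d + 1) → ℕ)
    (A : Matrix (Fin (d + 1)) (Fin (d + 1)) ℝ)
    (hA : ∀ i j, A i j = if i = j then 0 else if b i = b j then 1 else lam ^ 2)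
    (Abar : Matrix (Fin (d + 2)) (Fin (d + 2)) ℝ)
    (hbar00 : Abar 0 0 = 0)
    (hbar0row : ∀ j : Fin (d + 1), Abar 0 j.succ = 1)
    (hbar0col : ∀ i : Fin (d + 1), Abar i.succ 0 = 1)
    (hbarA : ∀ i j : Fin (d + 1), Abar i.succ j.succ = A i j) :
    (-1 : ℝ) ^ (d + 1) * (lam ^ 2 * Abar.det + A.det) > 0 :=
  stmt_6_general d lam hlam b A hA Abar hbar00 hbar0row hbar0col hbarA
end

section
/- (Menger's criterion) Let D : Matrix (Fin (d+1)) (Fin (d+1)) ℝ be a symmetric matrix with zero diagonal and strictly positive off-diagonal entries satisfying the triangle inequality D i k ≤ D i j + D j k for all i, j, k. Let A be the matrix of entrywise squares, A i j = (D i j)², and let Ā be the (d+2)×(d+2) matrix obtained by bordering A with a new first row and first column both equal to (0, 1, 1, …, 1). Then there exist points p : Fin (d+1) → EuclideanSpace ℝ (Fin d) with dist (p i) (p j) = D i j for all i, j if and only if (−1)^{d+1} · det Ā ≥ 0 and, for every index i₀, there exist points q : Fin (d+1) → EuclideanSpace ℝ (Fin (d−1)) indexed by the complementary d-element subset realizing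 the restriction of D to the indices other than i₀. -/
/-!
Put the first point at the origin: points realizing `D` are then encoded by the vectors
`p a - p 0`, whose Gram matrix `G a b = (D 0 a² + D 0 b² - D a b²) / 2` depends on `D` alone, so
`D` is realizable in `ℝ^d` iff `G` is positive semidefinite. A Schur complement computation gives
`(-1)^(d+1) det Ā = 2^d det G`. Finally, a symmetric matrix is positive semidefinite as soon as
all its principal minors are nonnegative: the full one is `det G`, and every proper one is a
principal minor of the Gram matrix of a configuration with one point removed, which is
realizable by hypothesis.
-/

open Matrix

namespace Matrix

variable {n : Type*} [Fintype n] [DecidableEq n]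

open Polynomial in
theorem one_le_det_one_add_smul_of_det_submatrix_nonneg {G : Matrix n n ℝ}
    (hminors : ∀ s : Finset n, 0 ≤ (G.submatrix ((↑) : s → n) (↑)).det) {t : ℝ}
    (ht : 0 ≤ t) :
    1 ≤ (1 + t • G).det := by
  set p : ℝ[X] := det (1 + (X : ℝ[X]) • G.map C)
  have hcoeff (k : ℕ) : 0 ≤ p.coeff k := by
    rw [coeff_det_one_add_X_smul_eq_sum_minors]
    exact Finset.sum_nonneg fun s _ => hminors s
  have heval (x : ℝ) : p.eval x = (1 + x • G).det := by
    rw [← coe_evalRingHom, RingHom.map_det, map_add, map_one]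
    congr 2
    ext i j
    simp only [RingHom.mapMatrix_apply, map_apply, smul_apply, smul_eq_mul, coe_evalRingHom,
      eval_mul, eval_X, eval_C]
  have hconst : p.coeff 0 = 1 := by simp [coeff_zero_eq_eval_zero, heval]
  rw [← heval, eval_eq_sum_range, Finset.sum_range_succ', pow_zero, mul_one, hconst]
  exact le_add_of_nonneg_left <|
    Finset.sum_nonneg fun k _ => mul_nonneg (hcoeff _) (pow_nonneg ht _)

theorem IsHermitian.posSemidef_of_det_submatrix_nonneg {G : Matrix n n ℝ} (hG : G.IsHermitian)
    (hminors : ∀ s : Finset n, 0 ≤ (G.submatrix ((↑) : s → n) (↑)).det) :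
    G.PosSemidef := by
  refine hG.posSemidef_iff_eigenvalues_nonneg.mpr fun i => ?_
  by_contra! hneg
  set v := (hG.eigenvectorBasis i).ofLp
  have hv : v ≠ 0 := by simpa [v] using hG.eigenvectorBasis.orthonormal.ne_zero i
  -- `det (1 + t • G) ≥ 1` for `t ≥ 0`, yet it vanishes at `t = -1/λ` when `λ < 0`
  have hker : (1 + (-(hG.eigenvalues i)⁻¹) • G) *ᵥ v = 0 := by
    rw [add_mulVec, one_mulVec, smul_mulVec, hG.mulVec_eigenvectorBasis, smul_smul,
      neg_mul, inv_mul_cancel₀ hneg.ne, neg_one_smul, add_neg_cancel]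
  have hdet := exists_mulVec_eq_zero_iff.mp ⟨v, hv, hker⟩
  have := one_le_det_one_add_smul_of_det_submatrix_nonneg hminors
    (t := -(hG.eigenvalues i)⁻¹) (by simpa using hneg.le)
  linarith

open scoped MatrixOrder in
theorem PosSemidef.exists_gram_eq {G : Matrix n n ℝ} (hG : G.PosSemidef) :
    ∃ v : n → EuclideanSpace ℝ n, gram ℝ v = G := by
  obtain ⟨B, rfl⟩ := CStarAlgebra.nonneg_iff_eq_star_mul_self.mp hG.nonneg
  refine ⟨fun j => WithLp.toLp 2 fun i => B i j, ?_⟩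
  rw [gram_eq_conjTranspose_mul (EuclideanSpace.basisFun n ℝ), star_eq_conjTranspose]
  rfl

end Matrix

section CayleyMenger

variable {R : Type*} [CommRing R]

def cayleyMengerBorder {n : ℕ} (A : Matrix (Fin (n + 1)) (Fin (n + 1)) R) :
    Matrix (Fin (n + 2)) (Fin (n + 2)) R :=
  of (vecCons (vecCons 0 fun _ => 1) fun i => vecCons 1 (A i))

theorem det_cayleyMengerBorder {n : ℕ} (A : Matrix (Fin (n + 1)) (Fin (n + 1)) R) :
    (cayleyMengerBorder A).det =
      -(of fun i j : Fin n => A i.succ j.succ - A 0 j.succ - A i.succ 0 + A 0 0).det := by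
  -- Schur complement of the block `!![0, 1; 1, A 0 0]` formed by the border and the first point
  let e : Fin 2 ⊕ Fin n ≃ Fin (n + 2) := finSumFinEquiv.trans (finCongr (Nat.add_comm 2 n))
  have he0 : e (.inl 0) = 0 := rfl
  have he1 : e (.inl 1) = Fin.succ 0 := rfl
  have heR (j : Fin n) : e (.inr j) = j.succ.succ := Fin.ext (by simp [e])
  let K : Matrix (Fin 2) (Fin 2) R := !![0, 1; 1, A 0 0]
  let _ : Invertible K := ⟨!![-A 0 0, 1; 1, 0],
    by ext i j; fin_cases i <;> fin_cases j <;> simp [K],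
    by ext i j; fin_cases i <;> fin_cases j <;> simp [K]⟩
  have hblocks : (cayleyMengerBorder A).submatrix e e = fromBlocks K
      (of ![1, fun j => A 0 j.succ]) (of fun i => ![1, A i.succ 0])
      (of fun i j => A i.succ j.succ) := by
    ext (i | i) (j | j)
    · fin_cases i <;> fin_cases j <;> rfl
    · fin_cases i <;> simp [cayleyMengerBorder, he0, he1, heR]
    · fin_cases j <;> simp [cayleyMengerBorder, he0, he1, heR]
    · simp [cayleyMengerBorder, heR]
  rw [← det_submatrix_equiv_self e, hblocks, det_fromBlocks₁₁, det_fin_two_of,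
    show ⅟K = !![-A 0 0, 1; 1, 0] from rfl, zero_mul, zero_sub, one_mul, neg_one_mul]
  congr 2
  ext i j
  simp only [Matrix.sub_apply, of_apply, mul_apply, Fin.sum_univ_two, cons_val', cons_val_fin_one,
    cons_val_zero, cons_val_one, Pi.one_apply, one_mul, mul_one, mul_zero, add_zero]
  ring

end CayleyMenger

section DistGram

variable {ι E : Type*} [NormedAddCommGroup E] [InnerProductSpace ℝ E]

noncomputable def distGram (D : Matrix ι ι ℝ) (o : ι) :
    Matrix {a // a ≠ o} {a // a ≠ o} ℝ :=
  of fun a b => (D o a ^ 2 + D o b ^ 2 - D a b ^ 2) / 2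

theorem distGram_eq_gram {D : Matrix ι ι ℝ} {p : ι → E}
    (hp : ∀ a b, dist (p a) (p b) = D a b) (o : ι) :
    distGram D o = gram ℝ (fun a : {a // a ≠ o} => p a - p o) := by
  ext a b
  rw [gram_apply, real_inner_eq_norm_mul_self_add_norm_mul_self_sub_norm_sub_mul_self_div_two,
    sub_sub_sub_cancel_right, ← dist_eq_norm, ← dist_eq_norm, ← dist_eq_norm,
    dist_comm (p a), dist_comm (p b), hp, hp, hp]
  simp only [distGram, of_apply]
  ring

theorem posSemidef_distGram [Finite ι] {D : Matrix ι ι ℝ} {p : ι → E}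
    (hp : ∀ a b, dist (p a) (p b) = D a b) (o : ι) : (distGram D o).PosSemidef := by
  rw [distGram_eq_gram hp]
  exact posSemidef_gram ℝ _

variable [Fintype ι] [DecidableEq ι]

theorem exists_dist_eq_of_posSemidef_distGram {D : Matrix ι ι ℝ}
    (hsymm : ∀ a b, D a b = D b a) (hdiag : ∀ a, D a a = 0) (hnonneg : ∀ a b, 0 ≤ D a b)
    {o : ι} (hG : (distGram D o).PosSemidef) {m : ℕ} (hcard : Fintype.card ι = m + 1) :
    ∃ p : ι → EuclideanSpace ℝ (Fin m), ∀ a b, dist (p a) (p b) = D a b := by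
  let e : {a // a ≠ o} ≃ Fin m := Fintype.equivFinOfCardEq (by simp [hcard])
  obtain ⟨v, hv⟩ := (hG.submatrix e.symm).exists_gram_eq
  let p : ι → EuclideanSpace ℝ (Fin m) := fun a => if h : a = o then 0 else v (e ⟨a, h⟩)
  have hinner (a b : ι) : inner ℝ (p a) (p b) = (D o a ^ 2 + D o b ^ 2 - D a b ^ 2) / 2 := by
    by_cases ha : a = o
    · subst ha; simp [p, hdiag]
    by_cases hb : b = o
    · subst hb; simp [p, hdiag, hsymm a b]
    simp only [p, ha, hb, dite_false]
    rw [← gram_apply, hv]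
    simp [distGram]
  refine ⟨p, fun a b => (sq_eq_sq₀ dist_nonneg (hnonneg a b)).mp ?_⟩
  rw [dist_eq_norm, norm_sub_sq_real, ← real_inner_self_eq_norm_sq,
    ← real_inner_self_eq_norm_sq, hinner, hinner, hinner, hdiag, hdiag]
  ring

theorem exists_euclidean_dist_eq {m : ℕ} (hcard : Fintype.card ι = m + 1) (p : ι → E) :
    ∃ q : ι → EuclideanSpace ℝ (Fin m), ∀ a b, dist (q a) (q b) = dist (p a) (p b) := by
  have : Nonempty ι := Fintype.card_pos_iff.mp (by omega)
  exact exists_dist_eq_of_posSemidef_distGram (D := of fun a b => dist (p a) (p b))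
    (fun _ _ => dist_comm _ _) (fun _ => dist_self _) (fun _ _ => dist_nonneg)
    (posSemidef_distGram (fun _ _ => rfl) (Classical.arbitrary ι)) hcard

theorem posSemidef_distGram_of_det_nonneg {D : Matrix ι ι ℝ} (hsymm : ∀ a b, D a b = D b a)
    {o : ι} (hdet : 0 ≤ (distGram D o).det)
    (hdel : ∀ k ≠ o, ∃ q : {i // i ≠ k} → E, ∀ i j, dist (q i) (q j) = D i j) :
    (distGram D o).PosSemidef := by
  refine IsHermitian.posSemidef_of_det_submatrix_nonneg ?_ fun s => ?_
  · ext a b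
    simp only [conjTranspose_apply, star_trivial, distGram, of_apply, hsymm a.1 b.1]
    ring
  by_cases hs : s = Finset.univ
  · subst hs
    exact hdet.trans_eq (det_submatrix_equiv_self (Equiv.subtypeUnivEquiv Finset.mem_univ) _).symm
  obtain ⟨k, hk⟩ : ∃ k, k ∉ s := by simpa [Finset.eq_univ_iff_forall] using hs
  obtain ⟨q, hq⟩ := hdel k k.2
  let f : s → {i : {i // i ≠ k.1} // i ≠ ⟨o, k.2.symm⟩} := fun a =>
    ⟨⟨a.1.1, fun h => hk (Subtype.ext h ▸ a.2)⟩,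
      fun h => a.1.2 (congrArg Subtype.val h)⟩
  have hsub : (distGram D o).submatrix ((↑) : s → _) (↑) =
      (distGram (D.submatrix Subtype.val Subtype.val) _).submatrix f f := rfl
  rw [hsub]
  exact ((posSemidef_distGram (D := D.submatrix Subtype.val Subtype.val) hq _).submatrix
    f).det_nonneg

end DistGram

theorem neg_one_pow_mul_det_cayleyMengerBorder_sq {n : ℕ}
    {D : Matrix (Fin (n + 1)) (Fin (n + 1)) ℝ}
    (hsymm : ∀ i j, D i j = D j i) (hdiag : ∀ i, D i i = 0) :
    (-1 : ℝ) ^ (n + 1) * (cayleyMengerBorder (of fun i j => D i j ^ 2)).det =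
      2 ^ n * (distGram D 0).det := by
  let e := finSuccAboveEquiv (0 : Fin (n + 1))
  have hschur : (of fun i j : Fin n => D i.succ j.succ ^ 2 - D 0 j.succ ^ 2 - D i.succ 0 ^ 2 +
      D 0 0 ^ 2) = (-2 : ℝ) • (distGram D 0).submatrix e e := by
    ext i j
    simp only [of_apply, Matrix.smul_apply, submatrix_apply, distGram, e, finSuccAboveEquiv_apply,
      Fin.zero_succAbove, hsymm _ 0, hdiag, smul_eq_mul]
    ring
  rw [det_cayleyMengerBorder]
  simp only [of_apply]
  rw [hschur, det_smul, Fintype.card_fin, det_submatrix_equiv_self, pow_succ, mul_neg_one,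
    neg_mul_neg, ← mul_assoc, ← mul_pow]
  norm_num

theorem stmt_7_general (d : ℕ)
    (D : Matrix (Fin (d + 1)) (Fin (d + 1)) ℝ)
    (hsymm : ∀ i j, D i j = D j i)
    (hdiag : ∀ i, D i i = 0)
    (hpos : ∀ i j, i ≠ j → 0 < D i j)
    (A : Matrix (Fin (d + 1)) (Fin (d + 1)) ℝ)
    (hA : ∀ i j, A i j = (D i j) ^ 2)
    (Abar : Matrix (Fin (d + 2)) (Fin (d + 2)) ℝ)
    (hbar00 : Abar 0 0 = 0)
    (hbar0row : ∀ j : Fin (d + 1), Abar 0 j.succ = 1)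
    (hbar0col : ∀ i : Fin (d + 1), Abar i.succ 0 = 1)
    (hbarA : ∀ i j : Fin (d + 1), Abar i.succ j.succ = A i j) :
    (∃ p : Fin (d + 1) → EuclideanSpace ℝ (Fin d),
        ∀ i j, dist (p i) (p j) = D i j) ↔
      ((-1 : ℝ) ^ (d + 1) * Abar.det ≥ 0 ∧
        ∀ i₀ : Fin (d + 1),
          ∃ q : {i : Fin (d + 1) // i ≠ i₀} → EuclideanSpace ℝ (Fin (d - 1)),
            ∀ i j, dist (q i) (q j) = D i.1 j.1) := by
  have hAbar : Abar = cayleyMengerBorder (of fun i j => D i j ^ 2) := by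
    ext i j
    cases i using Fin.cases <;> cases j using Fin.cases <;>
      simp [cayleyMengerBorder, hbar00, hbar0row, hbar0col, hbarA, hA]
  have hnonneg (i j : Fin (d + 1)) : 0 ≤ D i j := by
    rcases eq_or_ne i j with rfl | hij
    · exact (hdiag i).ge
    · exact (hpos i j hij).le
  rw [ge_iff_le, hAbar, neg_one_pow_mul_det_cayleyMengerBorder_sq hsymm hdiag,
    mul_nonneg_iff_of_pos_left (by positivity)]
  constructor
  · rintro ⟨p, hp⟩
    refine ⟨(posSemidef_distGram hp 0).det_nonneg, fun i₀ => ?_⟩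
    rcases Nat.eq_zero_or_pos d with rfl | hd
    · exact ⟨fun i => (i.2 (Subsingleton.elim (α := Fin 1) _ _)).elim,
        fun i => (i.2 (Subsingleton.elim (α := Fin 1) _ _)).elim⟩
    obtain ⟨q, hq⟩ := exists_euclidean_dist_eq (m := d - 1) (by simp; omega)
      (fun i : {i // i ≠ i₀} => p i)
    exact ⟨q, fun i j => (hq i j).trans (hp i j)⟩
  · rintro ⟨hdet, hdel⟩
    exact exists_dist_eq_of_posSemidef_distGram hsymm hdiag hnonneg
      (posSemidef_distGram_of_det_nonneg hsymm hdet fun k _ => hdel k) (Fintype.card_fin _)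

theorem stmt_7 (d : ℕ)
    (D : Matrix (Fin (d + 1)) (Fin (d + 1)) ℝ)
    (hsymm : ∀ i j, D i j = D j i)
    (hdiag : ∀ i, D i i = 0)
    (hpos : ∀ i j, i ≠ j → 0 < D i j)
    (htri : ∀ i j k, D i k ≤ D i j + D j k)
    (A : Matrix (Fin (d + 1)) (Fin (d + 1)) ℝ)
    (hA : ∀ i j, A i j = (D i j) ^ 2)
    (Abar : Matrix (Fin (d + 2)) (Fin (d + 2)) ℝ)
    (hbar00 : Abar 0 0 = 0)
    (hbar0row : ∀ j : Fin (d + 1), Abar 0 j.succ = 1)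
    (hbar0col : ∀ i : Fin (d + 1), Abar i.succ 0 = 1)
    (hbarA : ∀ i j : Fin (d + 1), Abar i.succ j.succ = A i j) :
    (∃ p : Fin (d + 1) → EuclideanSpace ℝ (Fin d),
        ∀ i j, dist (p i) (p j) = D i j) ↔
      ((-1 : ℝ) ^ (d + 1) * Abar.det ≥ 0 ∧
        ∀ i₀ : Fin (d + 1),
          ∃ q : {i : Fin (d + 1) // i ≠ i₀} → EuclideanSpace ℝ (Fin (d - 1)),
            ∀ i j, dist (q i) (q j) = D i.1 j.1) :=
  stmt_7_general d D hsymm hdiag hpos A hA Abar hbar00 hbar0row hbar0col hbarA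
end

section
/- Let λ ≥ 2 be a real number and d ≥ 1. Consider the set S of affinely independent families p : Fin (d+1) → EuclideanSpace ℝ (Fin d) whose pairwise distances all lie in {1, λ}, modulo the equivalence relation identifying p and q when some isometry f of EuclideanSpace ℝ (Fin d) and some permutation σ of Fin (d+1) satisfy f (p i) = q (σ i) for all i. Then the quotient of S by this relation is in bijection with the set of partitions of d+1 (Nat.Partition (d+1)). -/
/-- A configuration: an affinely independent family of `d+1` points in
`d`-dimensional Euclidean space whose pairwise distances all lie in `{1, lam}`. -/
def Config (d : ℕ) (lam : ℝ) : Type :=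
  { p : Fin (d + 1) → EuclideanSpace ℝ (Fin d) //
    AffineIndependent ℝ p ∧ ∀ i j, i ≠ j → dist (p i) (p j) ∈ ({1, lam} : Set ℝ) }

/-- Two configurations are isomorphic (congruent) if some isometry of the ambient
space maps one onto the other up to relabeling of the vertices. -/
def ConfigIso (d : ℕ) (lam : ℝ) (p q : Config d lam) : Prop :=
  ∃ (f : EuclideanSpace ℝ (Fin d) ≃ᵢ EuclideanSpace ℝ (Fin d))
    (σ : Equiv.Perm (Fin (d + 1))), ∀ i, f (p.1 i) = q.1 (σ i)

/-!
Since `λ ≥ 2`, being equal or at distance `1` is an equivalence relation on the vertices: if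
`|pᵢpⱼ| = |pⱼpₖ| = 1`, strict convexity and affine independence give `|pᵢpₖ| < 2 ≤ λ`, hence
`|pᵢpₖ| = 1`. This relation determines all distances, and affinely independent `(d+1)`-tuples
in `ℝ^d` with the same distances differ by an isometry; so two configurations are congruent up
to relabelling iff their relations agree up to relabelling, iff the relations have the same
multiset of class sizes. Every equivalence relation `s` occurs: the points
`eᵢ / √2 + √((λ² - 1) / 2) e_[i]` of `ℝ^(Fin (d+1) ⊕ Fin (d+1)/s)` are at distance `1` within
a class and `λ` across classes, and being affinely independent they span a `d`-dimensional
affine subspace.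
-/

open Finset Function Module
open scoped RealInnerProductSpace Congruent

section Combinatorics

theorem Finite.exists_equiv_comp_eq_of_card_fiber_eq {α β γ : Type*} [Finite α] [Finite β]
    (f : α → γ) (g : β → γ) (h : ∀ c, Nat.card {a // f a = c} = Nat.card {b // g b = c}) :
    ∃ e : α ≃ β, ∀ a, g (e a) = f a :=
  ⟨Equiv.ofFiberEquiv fun c => (Finite.card_eq.1 (h c)).some, Equiv.ofFiberEquiv_map _⟩

variable {α β γ : Type*} [Fintype α] [Fintype β]

theorem Fintype.card_fiber_eq_count [DecidableEq γ] (f : α → γ) (c : γ) :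
    Nat.card {a // f a = c} = (univ.val.map f).count c := by
  rw [Nat.card_eq_fintype_card, Fintype.card_subtype, Multiset.count_map, card_def, filter_val]
  simp_rw [eq_comm]

theorem Fintype.exists_equiv_comp_eq_of_map_univ_eq (f : α → γ) (g : β → γ)
    (h : univ.val.map f = univ.val.map g) : ∃ e : α ≃ β, ∀ a, g (e a) = f a := by
  classical
  exact Finite.exists_equiv_comp_eq_of_card_fiber_eq f g fun c => by
    rw [card_fiber_eq_count, card_fiber_eq_count, h]

theorem Composition.card_index_eq {n : ℕ} (c : Composition n) (i : Fin c.length) :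
    Nat.card {j // c.index j = i} = c.blocksFun i := by
  rw [← Nat.card_fin (c.blocksFun i), ← Nat.card_range_of_injective (c.embedding i).injective]
  exact Nat.card_congr
    (Equiv.subtypeEquivRight fun j => eq_comm.trans c.mem_range_embedding_iff'.symm)

namespace Setoid

noncomputable def classSize {α : Type*} (s : Setoid α) (q : Quotient s) : ℕ :=
  Nat.card {a // Quotient.mk s a = q}

theorem classSize_mk {α : Type*} (s : Setoid α) (a : α) :
    s.classSize ⟦a⟧ = Nat.card {b // s b a} := by
  simp only [classSize, Quotient.eq]

open scoped Classical in
noncomputable def natPartition {n : ℕ} (s : Setoid (Fin n)) : n.Partition where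
  parts := univ.val.map s.classSize
  parts_pos := by
    simp only [Multiset.mem_map, forall_exists_index, and_imp]
    rintro _ q - rfl
    induction q using Quotient.inductionOn with
    | h a => exact Nat.card_pos_iff.2 ⟨⟨⟨a, rfl⟩⟩, inferInstance⟩
  parts_sum := by
    change ∑ q, Nat.card {a // Quotient.mk s a = q} = n
    rw [← Nat.card_sigma, Nat.card_congr (Equiv.sigmaFiberEquiv _), Nat.card_fin]

variable {n : ℕ}

theorem natPartition_comap (s : Setoid (Fin n)) (e : Equiv.Perm (Fin n)) :
    (s.comap e).natPartition = s.natPartition := by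
  classical
  let Q : Quotient (s.comap e) ≃ Quotient s := Quotient.congr e fun _ _ => Iff.rfl
  have hQ : ∀ q, s.classSize (Q q) = (s.comap e).classSize q := by
    refine Quotient.ind fun a => ?_
    refine Nat.card_congr (e.subtypeEquiv fun b => ?_).symm
    simp [Q, Quotient.eq, comap_rel]
  refine Nat.Partition.ext ?_
  simp only [natPartition, ← hQ]
  rw [← Multiset.map_univ_val_equiv Q, Multiset.map_map]
  rfl

theorem exists_eq_comap_of_natPartition_eq {s t : Setoid (Fin n)}
    (h : s.natPartition = t.natPartition) : ∃ e : Equiv.Perm (Fin n), s = t.comap e := by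
  classical
  obtain ⟨Q, hQ⟩ := Fintype.exists_equiv_comp_eq_of_map_univ_eq s.classSize t.classSize
    (congrArg Nat.Partition.parts h)
  obtain ⟨e, he⟩ := Finite.exists_equiv_comp_eq_of_card_fiber_eq (Q ∘ Quotient.mk s)
    (Quotient.mk t) fun c => calc
      Nat.card {a // Q ⟦a⟧ = c} = s.classSize (Q.symm c) :=
        Nat.card_congr (Equiv.subtypeEquivRight fun a => Q.eq_symm_apply.symm)
      _ = t.classSize c := by rw [← hQ, Q.apply_symm_apply]
  refine ⟨e, Setoid.ext fun a b => ?_⟩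
  calc s a b ↔ Q ⟦a⟧ = Q ⟦b⟧ := (Q.apply_eq_iff_eq.trans Quotient.eq).symm
    _ ↔ ⟦e a⟧ = ⟦e b⟧ := by rw [he, he]; rfl
    _ ↔ t.comap e a b := Quotient.eq

theorem natPartition_eq_iff {s t : Setoid (Fin n)} :
    s.natPartition = t.natPartition ↔ ∃ e : Equiv.Perm (Fin n), s = t.comap e :=
  ⟨exists_eq_comap_of_natPartition_eq, by rintro ⟨e, rfl⟩; exact natPartition_comap t e⟩

theorem exists_natPartition_eq (P : n.Partition) : ∃ s : Setoid (Fin n), s.natPartition = P := by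
  obtain ⟨c, rfl⟩ := Nat.Partition.ofComposition_surj P
  have hsurj : Surjective c.index := fun i =>
    ⟨c.embedding i ⟨0, c.one_le_blocksFun i⟩, c.index_embedding i _⟩
  let Q := quotientKerEquivOfSurjective c.index hsurj
  have hQ : ∀ q, (ker c.index).classSize q = c.blocksFun (Q q) := by
    refine Quotient.ind fun a => ?_
    rw [classSize_mk, ← c.card_index_eq]
    exact Nat.card_congr (Equiv.subtypeEquivRight fun b => ker_def)
  classical
  refine ⟨ker c.index, Nat.Partition.ext ?_⟩
  simp only [natPartition, hQ, Nat.Partition.ofComposition_parts]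
  rw [← Multiset.map_univ_val_equiv Q.symm, Multiset.map_map]
  simp only [comp_apply, Equiv.apply_symm_apply]
  rw [Fin.univ_val_map, c.ofFn_blocksFun]

end Setoid
end Combinatorics

theorem AffineIndependent.dist_lt_dist_add_dist {ι V P : Type*} [NormedAddCommGroup V]
    [NormedSpace ℝ V] [StrictConvexSpace ℝ V] [MetricSpace P] [NormedAddTorsor V P]
    {p : ι → P} (hp : AffineIndependent ℝ p) {i j k : ι} (hij : i ≠ j) (hjk : j ≠ k) :
    dist (p i) (p k) < dist (p i) (p j) + dist (p j) (p k) := by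
  refine (dist_triangle _ _ _).lt_of_ne fun h => ?_
  have hj : p j ∈ affineSpan ℝ (p '' {i, k}) := by
    rw [Set.image_pair]
    exact (dist_add_dist_eq_iff.1 h.symm).mem_affineSpan
  rcases (hp.mem_affineSpan_iff j _).1 hj with h | h
  exacts [hij h.symm, hjk h]

section Rigidity

variable {E F : Type*} [NormedAddCommGroup E] [InnerProductSpace ℝ E]
  [NormedAddCommGroup F] [InnerProductSpace ℝ F]

theorem Module.Basis.exists_linearIsometryEquiv_of_inner_eq {ι : Type*} (bE : Basis ι ℝ E)
    (bF : Basis ι ℝ F) (h : ∀ i j, ⟪bE i, bE j⟫ = ⟪bF i, bF j⟫) :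
    ∃ T : E ≃ₗᵢ[ℝ] F, ∀ i, T (bE i) = bF i := by
  let T := bE.equiv bF (Equiv.refl ι)
  have hT : ∀ i, T (bE i) = bF i := fun i => bE.equiv_apply i bF _
  have hinner : (innerₗ F).compl₁₂ (T : E →ₗ[ℝ] F) (T : E →ₗ[ℝ] F) = innerₗ E :=
    LinearMap.ext_basis bE bE fun i j => by simp [hT, h]
  exact ⟨T.isometryOfInner fun x y => LinearMap.congr_fun₂ hinner x y, hT⟩

theorem real_inner_sub_sub_eq_dist (x y z : E) :
    ⟪x - z, y - z⟫ = (dist x z ^ 2 + dist y z ^ 2 - dist x y ^ 2) / 2 := by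
  have h := norm_sub_sq_real (x - z) (y - z)
  rw [sub_sub_sub_cancel_right] at h
  rw [dist_eq_norm, dist_eq_norm, dist_eq_norm]
  linarith

noncomputable def AffineIndependent.basisVSub [FiniteDimensional ℝ E] {d : ℕ}
    (hE : finrank ℝ E = d) {p : Fin (d + 1) → E} (hp : AffineIndependent ℝ p) :
    Basis {i : Fin (d + 1) // i ≠ 0} ℝ E :=
  basisOfLinearIndependentOfCardEqFinrank' _
    ((affineIndependent_iff_linearIndependent_vsub ℝ p 0).1 hp) (by simp [hE])

@[simp]
theorem AffineIndependent.basisVSub_apply [FiniteDimensional ℝ E] {d : ℕ}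
    (hE : finrank ℝ E = d) {p : Fin (d + 1) → E} (hp : AffineIndependent ℝ p)
    (i : {i : Fin (d + 1) // i ≠ 0}) : hp.basisVSub hE i = p i - p 0 := by
  simp [basisVSub]

theorem exists_isometryEquiv_of_congruent [FiniteDimensional ℝ E] [FiniteDimensional ℝ F]
    {d : ℕ} (hE : finrank ℝ E = d) (hF : finrank ℝ F = d) {p : Fin (d + 1) → E}
    {q : Fin (d + 1) → F} (hp : AffineIndependent ℝ p) (hq : AffineIndependent ℝ q)
    (hpq : p ≅ q) : ∃ f : E ≃ᵢ F, ∀ i, f (p i) = q i := by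
  obtain ⟨T, hT⟩ := (hp.basisVSub hE).exists_linearIsometryEquiv_of_inner_eq (hq.basisVSub hF)
    fun i j => by
      simp [real_inner_sub_sub_eq_dist, congruent_iff_dist_eq.1 hpq]
  refine ⟨((IsometryEquiv.subRight (p 0)).trans T.toIsometryEquiv).trans
    (IsometryEquiv.addRight (q 0)), fun i => ?_⟩
  by_cases hi : i = 0
  · subst hi; simp
  · have hTi : T (p i - p 0) = q i - q 0 := by simpa using hT ⟨i, hi⟩
    simp [hTi]

end Rigidity

theorem AffineIndependent.exists_euclideanSpace_congruent {E : Type*} [NormedAddCommGroup E]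
    [InnerProductSpace ℝ E] {d : ℕ} {P : Fin (d + 1) → E} (hP : AffineIndependent ℝ P) :
    ∃ p : Fin (d + 1) → EuclideanSpace ℝ (Fin d), AffineIndependent ℝ p ∧ (p ≅ P) := by
  let V := vectorSpan ℝ (Set.range P)
  have hV : finrank ℝ V = d := hP.finrank_vectorSpan (Fintype.card_fin _)
  let φ : V ≃ₗᵢ[ℝ] EuclideanSpace ℝ (Fin d) :=
    ((stdOrthonormalBasis ℝ V).reindex (finCongr hV)).repr
  let x : Fin (d + 1) → V := fun i =>
    ⟨P i -ᵥ P 0, vsub_mem_vectorSpan ℝ (Set.mem_range_self i) (Set.mem_range_self 0)⟩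
  let g : V →ᵃ[ℝ] E := (AffineEquiv.vaddConst ℝ (P 0)).toAffineMap.comp V.subtype.toAffineMap
  have hgx : g ∘ x = P := funext fun i => by simp [g, x]
  have hg : Isometry g := Isometry.of_dist_eq fun v w => by simp [g, dist_eq_norm]
  have hx : AffineIndependent ℝ x := AffineIndependent.of_comp g (hgx ▸ hP)
  refine ⟨φ ∘ x, hx.map' φ.toLinearEquiv.toLinearMap.toAffineMap φ.injective, ?_⟩
  have := ((Congruent.refl x).comp_left φ.isometry).comp_right hg
  rwa [hgx] at this

theorem exists_affineIndependent_dist_eq_ite {ι κ : Type*} [Fintype ι] [Fintype κ]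
    [DecidableEq ι] [DecidableEq κ] (c : ι → κ) {lam : ℝ} (hlam : 1 ≤ lam) :
    ∃ P : ι → EuclideanSpace ℝ (ι ⊕ κ), AffineIndependent ℝ P ∧
      ∀ i j, i ≠ j → dist (P i) (P j) = if c i = c j then 1 else lam := by
  set a := √(1 / 2)
  set b := √((lam ^ 2 - 1) / 2)
  have ha : a ^ 2 = 1 / 2 := Real.sq_sqrt (by norm_num)
  have hb : b ^ 2 = (lam ^ 2 - 1) / 2 := Real.sq_sqrt (by nlinarith)
  let P : ι → EuclideanSpace ℝ (ι ⊕ κ) := fun i =>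
    EuclideanSpace.single (.inl i) a + EuclideanSpace.single (.inr (c i)) b
  have hinner : ∀ i j,
      ⟪P i, P j⟫ = (if i = j then a ^ 2 else 0) + if c i = c j then b ^ 2 else 0 := by
    intro i j
    simp only [P, inner_add_left, inner_add_right, EuclideanSpace.inner_single_left,
      PiLp.single_apply]
    split_ifs <;> simp_all [sq]
  refine ⟨P, ?_, fun i j hij => ?_⟩
  · rw [affineIndependent_iff]
    intro s w _ hsum i hi
    have ha0 : a ≠ 0 := by positivity
    have := congrArg (fun v => v (.inl i)) hsum
    simpa [P, Finset.sum_apply, Pi.single_apply, hi, ha0] using this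
  · have hsq : dist (P i) (P j) ^ 2 = (if c i = c j then 1 else lam) ^ 2 := by
      rw [dist_eq_norm, norm_sub_sq_real, ← real_inner_self_eq_norm_sq,
        ← real_inner_self_eq_norm_sq, hinner, hinner, hinner]
      split_ifs <;> simp_all <;> linarith
    refine (sq_eq_sq₀ dist_nonneg ?_).1 hsq
    split_ifs <;> linarith

namespace Config

variable {d : ℕ} {lam : ℝ}

theorem dist_eq_one_trans (hlam : 2 ≤ lam) (p : Config d lam) {i j k : Fin (d + 1)}
    (hij : dist (p.1 i) (p.1 j) = 1) (hjk : dist (p.1 j) (p.1 k) = 1) (hik : i ≠ k) :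
    dist (p.1 i) (p.1 k) = 1 := by
  have hne : ∀ {a b}, dist (p.1 a) (p.1 b) = 1 → a ≠ b := by
    rintro a _ h rfl
    simp at h
  rcases p.2.2 i k hik with h | (h : _ = lam)
  · exact h
  · have := p.2.1.dist_lt_dist_add_dist (hne hij) (hne hjk)
    linarith

def distOneSetoid (hlam : 2 ≤ lam) (p : Config d lam) : Setoid (Fin (d + 1)) where
  r i j := i = j ∨ dist (p.1 i) (p.1 j) = 1
  iseqv :=
    { refl := fun _ => .inl rfl
      symm := by
        rintro i j (rfl | h)
        exacts [.inl rfl, .inr (dist_comm (p.1 i) _ ▸ h)]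
      trans := by
        rintro i j k (rfl | hij) (rfl | hjk)
        · exact .inl rfl
        · exact .inr hjk
        · exact .inr hij
        · by_cases hik : i = k
          exacts [.inl hik, .inr (dist_eq_one_trans hlam p hij hjk hik)] }

theorem distOneSetoid_iff (hlam : 2 ≤ lam) (p : Config d lam) {i j : Fin (d + 1)} (hij : i ≠ j) :
    p.distOneSetoid hlam i j ↔ dist (p.1 i) (p.1 j) = 1 :=
  or_iff_right hij

theorem dist_eq_dist_of_distOneSetoid_iff (hlam : 2 ≤ lam) {p q : Config d lam}
    {i j i' j' : Fin (d + 1)} (hij : i ≠ j) (hij' : i' ≠ j')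
    (h : p.distOneSetoid hlam i j ↔ q.distOneSetoid hlam i' j') :
    dist (p.1 i) (p.1 j) = dist (q.1 i') (q.1 j') := by
  rw [distOneSetoid_iff hlam p hij, distOneSetoid_iff hlam q hij'] at h
  have hlam1 : lam ≠ 1 := by linarith
  rcases p.2.2 i j hij with h1 | (h1 : _ = lam) <;>
    rcases q.2.2 i' j' hij' with h2 | (h2 : _ = lam)
  · rw [h1, h2]
  · exact absurd (h2 ▸ h.1 h1) hlam1
  · exact absurd (h1 ▸ h.2 h2) hlam1
  · rw [h1, h2]

noncomputable def partition (hlam : 2 ≤ lam) (p : Config d lam) : (d + 1).Partition :=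
  (p.distOneSetoid hlam).natPartition

theorem partition_eq_iff (hlam : 2 ≤ lam) {p q : Config d lam} :
    p.partition hlam = q.partition hlam ↔ ConfigIso d lam p q := by
  rw [partition, partition, Setoid.natPartition_eq_iff]
  constructor
  · rintro ⟨σ, hσ⟩
    have hcong : p.1 ≅ q.1 ∘ σ := congruent_iff_dist_eq.2 fun i j => by
      by_cases hij : i = j
      · simp [hij]
      · refine dist_eq_dist_of_distOneSetoid_iff hlam hij (σ.injective.ne hij) ?_
        rw [hσ, Setoid.comap_rel]
    obtain ⟨f, hf⟩ := exists_isometryEquiv_of_congruent (finrank_euclideanSpace_fin)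
      (finrank_euclideanSpace_fin) p.2.1 (q.2.1.comp_embedding σ.toEmbedding) hcong
    exact ⟨f, σ, hf⟩
  · rintro ⟨f, σ, hf⟩
    refine ⟨σ, Setoid.ext fun i j => ?_⟩
    change (i = j ∨ _) ↔ (σ i = σ j ∨ _)
    rw [← hf, ← hf, f.dist_eq, σ.injective.eq_iff]

theorem exists_distOneSetoid_eq (hlam : 2 ≤ lam) (s : Setoid (Fin (d + 1))) :
    ∃ p : Config d lam, p.distOneSetoid hlam = s := by
  classical
  obtain ⟨P, hP, hPdist⟩ := exists_affineIndependent_dist_eq_ite (Quotient.mk s)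
    (by linarith : 1 ≤ lam)
  obtain ⟨p, hp, hpP⟩ := hP.exists_euclideanSpace_congruent
  have hdist : ∀ i j, i ≠ j → dist (p i) (p j) = if ⟦i⟧ = ⟦j⟧ then 1 else lam :=
    fun i j hij => by rw [congruent_iff_dist_eq.1 hpP, hPdist i j hij]
  let q : Config d lam := ⟨p, hp, fun i j hij => by rw [hdist i j hij]; split_ifs <;> simp⟩
  refine ⟨q, Setoid.ext fun i j => ?_⟩
  by_cases hij : i = j
  · simp [hij]
  · have hlam1 : lam ≠ 1 := by linarith
    rw [distOneSetoid_iff hlam q hij, hdist i j hij, ← Quotient.eq (r := s)]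
    split_ifs with h <;> simp [h, hlam1]

end Config

theorem stmt_9_general (lam : ℝ) (hlam : 2 ≤ lam) (d : ℕ) :
    Nonempty (Quot (ConfigIso d lam) ≃ Nat.Partition (d + 1)) := by
  let F : Quot (ConfigIso d lam) → (d + 1).Partition :=
    Quot.lift (Config.partition hlam) fun _ _ => (Config.partition_eq_iff hlam).2
  refine ⟨.ofBijective F ⟨?_, fun P => ?_⟩⟩
  · rintro ⟨p⟩ ⟨q⟩ h
    exact Quot.sound ((Config.partition_eq_iff hlam).1 h)
  · obtain ⟨s, rfl⟩ := Setoid.exists_natPartition_eq P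
    obtain ⟨p, rfl⟩ := Config.exists_distOneSetoid_eq hlam s
    exact ⟨Quot.mk _ p, rfl⟩

theorem stmt_9 (lam : ℝ) (hlam : 2 ≤ lam) (d : ℕ) (hd : 1 ≤ d) :
    Nonempty (Quot (ConfigIso d lam) ≃ Nat.Partition (d + 1)) :=
  stmt_9_general lam hlam d
end
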